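/- arXiv:1602.08938 — 3 statements merged into one kernel-verified Lean document; each statement's English description precedes it below -/
import Mathlib

section
/- Let X_n be a sequence of non-negative random variables converging in distribution to a random variable X with E[X] = +∞. For each n let X_{n,1},…,X_{n,n} be i.i.d. copies of X_n. Then there exists a nonrandom positive sequence φ_n → +∞ such that P(X_{n,1} + ⋯ + X_{n,n} > φ_n·n) → 1 as n → ∞. -/
open MeasureTheory ProbabilityTheory Filter
open scoped Topology BoundedContinuousFunction ENNReal NNReal

/-!
Fix `c`. Since `E[X] = ∞`, monotone convergence gives a level `M` with `E[min(X, M)] > c + 1`,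
and since `x ↦ min(x⁺, M)` is bounded and continuous, weak convergence gives
`E[min(X_n, M)] ≥ c + 1` for large `n`. The truncated summands are independent, bounded by `M`
and lie below the `X_{n,i}`, so Chebyshev's inequality bounds `P(S_n ≤ c n)` by `M² / (4 n)`.
Hence `P(S_n > c n) → 1` for every fixed `c`, and a diagonal choice of `c = φ_n` growing slowly
enough keeps this convergence.
-/

noncomputable def clamp (M : ℝ≥0) : ℝ →ᵇ ℝ :=
  .compContinuous (.mkOfCompact ⟨((↑) : Set.Icc (0 : ℝ) M → ℝ), continuous_subtype_val⟩)
    ⟨Set.projIcc (0 : ℝ) M M.2, continuous_projIcc⟩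

lemma clamp_apply (M : ℝ≥0) (x : ℝ) : clamp M x = max 0 (min (M : ℝ) x) := rfl

lemma clamp_mem_Icc (M : ℝ≥0) (x : ℝ) : clamp M x ∈ Set.Icc 0 (M : ℝ) :=
  (Set.projIcc (0 : ℝ) M M.2 x).2

lemma clamp_le_self (M : ℝ≥0) {x : ℝ} (hx : 0 ≤ x) : clamp M x ≤ x := by
  rw [clamp_apply]; exact max_le hx (min_le_right _ _)

lemma clamp_mono (x : ℝ) : Monotone fun M : ℝ≥0 => clamp M x := fun M N hMN => by
  simp only [clamp_apply]; gcongr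

lemma tendsto_ofReal_clamp_natCast (x : ℝ) :
    Tendsto (fun n : ℕ => ENNReal.ofReal (clamp n x)) atTop (𝓝 (ENNReal.ofReal x)) := by
  refine tendsto_const_nhds.congr' ?_
  filter_upwards [eventually_ge_atTop ⌈x⌉₊] with n hn
  have hxn : x ≤ ((n : ℝ≥0) : ℝ) := by
    simpa using (Nat.le_ceil x).trans (Nat.cast_le.mpr hn)
  rw [clamp_apply, min_eq_right hxn, ENNReal.ofReal_max]
  simp

theorem Filter.exists_tendsto_atTop_tendsto_diag {α : Type*} {l : Filter α}
    [l.IsCountablyGenerated] {p : ℕ → ℕ → α} (hp : ∀ k, Tendsto (p k) atTop l) :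
    ∃ K : ℕ → ℕ, Tendsto K atTop atTop ∧ Tendsto (fun n => p (K n) n) atTop l := by
  obtain ⟨U, hU⟩ := l.exists_antitone_basis
  have hN : ∀ k, ∃ N, ∀ n ≥ N, p k n ∈ U k ∧ k ≤ n := fun k =>
    eventually_atTop.mp (((hp k).eventually (hU.mem k)).and (eventually_ge_atTop k))
  choose N hN using hN
  set K : ℕ → ℕ := fun n => Nat.findGreatest (fun k => N k ≤ n) n
  have le_K : ∀ k n, N k ≤ n → k ≤ K n := fun k n hkn =>
    Nat.le_findGreatest ((hN k (N k) le_rfl).2.trans hkn) hkn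
  have hK : Tendsto K atTop atTop :=
    tendsto_atTop_atTop.mpr fun k => ⟨N k, fun n => le_K k n⟩
  refine ⟨K, hK, hU.tendsto_right_iff.mpr fun j _ => ?_⟩
  filter_upwards [hK.eventually_ge_atTop j, eventually_ge_atTop (N 0)] with n hjK hn
  have hNK : N (K n) ≤ n := Nat.findGreatest_spec (P := fun k => N k ≤ n) (Nat.zero_le n) hn
  exact hU.antitone hjK (hN (K n) n hNK).1

section

variable {Ω : Type*} [MeasurableSpace Ω] {μ : Measure Ω}

lemma exists_lt_integral_clamp [IsFiniteMeasure μ] {f : Ω → ℝ} (hf : Measurable f)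
    (htop : ∫⁻ ω, ENNReal.ofReal (f ω) ∂μ = ⊤) (c : ℝ) :
    ∃ M : ℝ≥0, c < ∫ ω, clamp M (f ω) ∂μ := by
  have hlim :
      Tendsto (fun n : ℕ => ∫⁻ ω, ENNReal.ofReal (clamp n (f ω)) ∂μ) atTop (𝓝 ⊤) :=
    htop ▸ lintegral_tendsto_of_tendsto_of_monotone
      (fun n => ((clamp n).continuous.measurable.comp hf).ennreal_ofReal.aemeasurable)
      (ae_of_all _ fun ω _ _ hmn =>
        ENNReal.ofReal_le_ofReal (clamp_mono (f ω) (Nat.cast_le.mpr hmn)))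
      (ae_of_all _ fun ω => tendsto_ofReal_clamp_natCast (f ω))
  obtain ⟨n, hn⟩ := (hlim.eventually (lt_mem_nhds (ENNReal.ofReal_lt_top (r := c)))).exists
  refine ⟨n, (ENNReal.ofReal_lt_ofReal_iff'.mp ?_).1⟩
  have hIcc : ∀ᵐ ω ∂μ, clamp n (f ω) ∈ Set.Icc 0 (n : ℝ≥0).toReal :=
    ae_of_all _ fun ω => clamp_mem_Icc n (f ω)
  rwa [ofReal_integral_eq_lintegral_ofReal (hfi := ((memLp_of_bounded hIcc
    ((clamp n).continuous.measurable.comp hf).aestronglyMeasurable 1).integrable le_rfl))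
    (hIcc.mono fun _ h => h.1)]

lemma identDistrib_of_map_eq [NeZero μ] {α : Type*} [MeasurableSpace α] {f g : Ω → α}
    (hg : AEMeasurable g μ) (h : μ.map f = μ.map g) : IdentDistrib f g μ μ where
  aemeasurable_fst := .of_map_ne_zero (h ▸ (Measure.map_ne_zero_iff hg).mpr (NeZero.ne μ))
  aemeasurable_snd := hg
  map_eq := h

open Finset in
lemma measure_le_abs_sum_sub_sum_integral_le [IsProbabilityMeasure μ] {ι : Type*}
    {s : Finset ι} {Z : ι → Ω → ℝ} {a b t : ℝ} (hZ : ∀ i ∈ s, AEMeasurable (Z i) μ)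
    (hab : ∀ i ∈ s, ∀ᵐ ω ∂μ, Z i ω ∈ Set.Icc a b)
    (hindep : Set.Pairwise s fun i j => Z i ⟂ᵢ[μ] Z j) (ht : 0 < t) :
    μ {ω | t ≤ |∑ i ∈ s, Z i ω - ∑ i ∈ s, μ[Z i]|}
      ≤ ENNReal.ofReal (#s * ((b - a) / 2) ^ 2 / t ^ 2) := by
  have hL2 : ∀ i ∈ s, MemLp (Z i) 2 μ := fun i hi =>
    memLp_of_bounded (hab i hi) (hZ i hi).aestronglyMeasurable 2
  have hvar : variance (∑ i ∈ s, Z i) μ ≤ #s * ((b - a) / 2) ^ 2 := by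
    rw [IndepFun.variance_sum hL2 hindep, ← nsmul_eq_mul, ← sum_const]
    exact sum_le_sum fun i hi => variance_le_sq_of_bounded (hab i hi) (hZ i hi)
  have hmean : μ[∑ i ∈ s, Z i] = ∑ i ∈ s, μ[Z i] := by
    rw [Finset.sum_fn]
    exact integral_finsetSum s fun i hi => (hL2 i hi).integrable one_le_two
  calc μ {ω | t ≤ |∑ i ∈ s, Z i ω - ∑ i ∈ s, μ[Z i]|}
      = μ {ω | t ≤ |(∑ i ∈ s, Z i) ω - μ[∑ i ∈ s, Z i]|} := by
        rw [hmean]; simp only [Finset.sum_apply]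
    _ ≤ ENNReal.ofReal (variance (∑ i ∈ s, Z i) μ / t ^ 2) :=
        meas_ge_le_variance_div_sq (memLp_finsetSum' s hL2) ht
    _ ≤ _ := by gcongr

open Finset in
lemma measure_sum_le_mul_le [IsProbabilityMeasure μ] {n : ℕ} (hn : 0 < n)
    {Y : Fin n → Ω → ℝ} (hY : ∀ i, AEMeasurable (Y i) μ) (hY0 : ∀ i, 0 ≤ᵐ[μ] Y i)
    (hindep : iIndepFun Y μ) {M : ℝ≥0} {c m : ℝ} (hcm : c < m)
    (hm : ∀ i, m ≤ ∫ ω, clamp M (Y i ω) ∂μ) :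
    μ {ω | ∑ i, Y i ω ≤ c * n} ≤ ENNReal.ofReal ((M / 2) ^ 2 / ((m - c) ^ 2 * n)) := by
  set Z : Fin n → Ω → ℝ := fun i ω => clamp M (Y i ω)
  have hnR : (0 : ℝ) < n := Nat.cast_pos.mpr hn
  have hcheb := measure_le_abs_sum_sub_sum_integral_le (s := univ) (Z := Z) (a := 0) (b := M)
    (fun i _ => (clamp M).continuous.measurable.comp_aemeasurable (hY i))
    (fun i _ => ae_of_all _ fun ω => clamp_mem_Icc M (Y i ω))
    (fun i _ j _ hij => (hindep.indepFun hij).comp (clamp M).continuous.measurable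
      (clamp M).continuous.measurable)
    (mul_pos (sub_pos.mpr hcm) hnR)
  have hsub : {ω | ∑ i, Y i ω ≤ c * n}
      ≤ᵐ[μ] {ω | (m - c) * n ≤ |∑ i, Z i ω - ∑ i, μ[Z i]|} := by
    filter_upwards [ae_all_iff.mpr hY0] with ω hω hle
    have hZY : ∑ i, Z i ω ≤ c * n :=
      (sum_le_sum fun i _ => clamp_le_self M (hω i)).trans hle
    have hEZ : m * n ≤ ∑ i, μ[Z i] := by
      simpa [mul_comm] using card_nsmul_le_sum univ (fun i => μ[Z i]) m fun i _ => hm i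
    show (m - c) * n ≤ |∑ i, Z i ω - ∑ i, μ[Z i]|
    rw [abs_sub_comm]
    exact le_abs.mpr (Or.inl (by linarith))
  calc μ {ω | ∑ i, Y i ω ≤ c * n}
      ≤ μ {ω | (m - c) * n ≤ |∑ i, Z i ω - ∑ i, μ[Z i]|} := measure_mono_ae hsub
    _ ≤ _ := hcheb
    _ = _ := by
      congr 1
      simp only [card_univ, Fintype.card_fin, sub_zero]
      field_simp

lemma tendsto_measure_one_of_tendsto_measure_compl [IsProbabilityMeasure μ] {ι : Type*}
    {l : Filter ι} {s : ι → Set Ω} (h : Tendsto (fun i => μ (s i)ᶜ) l (𝓝 0)) :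
    Tendsto (fun i => μ (s i)) l (𝓝 1) := by
  have hlow : Tendsto (fun i => 1 - μ (s i)ᶜ) l (𝓝 1) := by
    simpa using ENNReal.Tendsto.sub tendsto_const_nhds h (Or.inl ENNReal.one_ne_top)
  refine tendsto_of_tendsto_of_tendsto_of_le_of_le hlow tendsto_const_nhds (fun i => ?_)
    fun i => prob_le_one
  exact tsub_le_iff_right.mpr (measure_univ (μ := μ) ▸ measure_univ_le_add_compl (s i))

theorem tendsto_measure_mul_lt_sum [IsProbabilityMeasure μ] {X : ℕ → Ω → ℝ}
    {Xlim : Ω → ℝ} (hXmeas : ∀ n, Measurable (X n)) (hXlimMeas : Measurable Xlim)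
    (hXnonneg : ∀ n ω, 0 ≤ X n ω)
    (hconv : ∀ f : ℝ →ᵇ ℝ,
      Tendsto (fun n => ∫ ω, f (X n ω) ∂μ) atTop (𝓝 (∫ ω, f (Xlim ω) ∂μ)))
    (hmean : ∫⁻ ω, ENNReal.ofReal (Xlim ω) ∂μ = ⊤) {Y : ℕ → ℕ → Ω → ℝ}
    (hYindep : ∀ n, iIndepFun (fun i : Fin n => Y n i) μ)
    (hYdist : ∀ n i, i < n → μ.map (Y n i) = μ.map (X n)) (c : ℝ) :
    Tendsto (fun n => μ {ω | c * n < ∑ i ∈ Finset.range n, Y n i ω}) atTop (𝓝 1) := by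
  obtain ⟨M, hM⟩ := exists_lt_integral_clamp hXlimMeas hmean (c + 1)
  have hident : ∀ n (i : Fin n), IdentDistrib (Y n i) (X n) μ μ := fun n i =>
    identDistrib_of_map_eq (hXmeas n).aemeasurable (hYdist n i i.isLt)
  have hbound : ∀ᶠ n : ℕ in atTop, μ {ω | c * n < ∑ i ∈ Finset.range n, Y n i ω}ᶜ
      ≤ ENNReal.ofReal ((M / 2) ^ 2 / n) := by
    filter_upwards [(hconv (clamp M)).eventually_const_le hM, eventually_gt_atTop 0]
      with n hn hn0
    simp_rw [Set.compl_ofPred, not_lt, ← Fin.sum_univ_eq_sum_range]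
    simpa using measure_sum_le_mul_le hn0 (fun i => (hident n i).aemeasurable_fst)
      (fun i => (hident n i).symm.ae_snd measurableSet_Ici (ae_of_all _ (hXnonneg n)))
      (hYindep n) (lt_add_one c)
      fun i => ((hident n i).comp (clamp M).continuous.measurable).integral_eq ▸ hn
  have hlim : Tendsto (fun n : ℕ => ENNReal.ofReal ((M / 2) ^ 2 / n)) atTop (𝓝 0) :=
    ENNReal.ofReal_zero ▸ (ENNReal.continuous_ofReal.tendsto 0).comp
      (tendsto_const_div_atTop_nhds_zero_nat _)
  exact tendsto_measure_one_of_tendsto_measure_compl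
    (tendsto_of_tendsto_of_tendsto_of_le_of_le' tendsto_const_nhds hlim
      (Eventually.of_forall fun _ => zero_le) hbound)

end

theorem stmt0_general {Ω : Type*} [MeasurableSpace Ω] (μ : Measure Ω) [IsProbabilityMeasure μ]
    (X : ℕ → Ω → ℝ) (Xlim : Ω → ℝ)
    (hXmeas : ∀ n, Measurable (X n)) (hXlimMeas : Measurable Xlim)
    (hXnonneg : ∀ n ω, 0 ≤ X n ω)
    (hconv : ∀ f : ℝ →ᵇ ℝ,
      Tendsto (fun n => ∫ ω, f (X n ω) ∂μ) atTop (𝓝 (∫ ω, f (Xlim ω) ∂μ)))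
    (hmean : ∫⁻ ω, ENNReal.ofReal (Xlim ω) ∂μ = ⊤)
    (Y : ℕ → ℕ → Ω → ℝ)
    (hYindep : ∀ n, iIndepFun (m := fun _ : Fin n => Real.measurableSpace)
      (fun i : Fin n => Y n i) μ)
    (hYdist : ∀ n i, i < n → μ.map (Y n i) = μ.map (X n)) :
    ∃ φ : ℕ → ℝ, (∀ n, 0 < φ n) ∧ Tendsto φ atTop atTop ∧
      Tendsto (fun n => μ {ω | φ n * n < ∑ i ∈ Finset.range n, Y n i ω}) atTop (𝓝 1) := by
  obtain ⟨K, hK, hKlim⟩ := exists_tendsto_atTop_tendsto_diag fun k : ℕ =>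
    tendsto_measure_mul_lt_sum hXmeas hXlimMeas hXnonneg hconv hmean hYindep hYdist (k + 1)
  refine ⟨fun n => K n + 1, fun n => by positivity, ?_, hKlim⟩
  exact tendsto_atTop_add_const_right _ 1 (tendsto_natCast_atTop_atTop.comp hK)

theorem stmt0 {Ω : Type*} [MeasurableSpace Ω] (μ : Measure Ω) [IsProbabilityMeasure μ]
    (X : ℕ → Ω → ℝ) (Xlim : Ω → ℝ)
    (hXmeas : ∀ n, Measurable (X n)) (hXlimMeas : Measurable Xlim)
    (hXnonneg : ∀ n ω, 0 ≤ X n ω) (hXlimNonneg : ∀ ω, 0 ≤ Xlim ω)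
    (hconv : ∀ f : ℝ →ᵇ ℝ,
      Tendsto (fun n => ∫ ω, f (X n ω) ∂μ) atTop (𝓝 (∫ ω, f (Xlim ω) ∂μ)))
    (hmean : ∫⁻ ω, ENNReal.ofReal (Xlim ω) ∂μ = ⊤)
    (Y : ℕ → ℕ → Ω → ℝ)
    (hYindep : ∀ n, iIndepFun (m := fun _ : Fin n => Real.measurableSpace)
      (fun i : Fin n => Y n i) μ)
    (hYdist : ∀ n i, i < n → μ.map (Y n i) = μ.map (X n)) :
    ∃ φ : ℕ → ℝ, (∀ n, 0 < φ n) ∧ Tendsto φ atTop atTop ∧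
      Tendsto (fun n => μ {ω | φ n * n < ∑ i ∈ Finset.range n, Y n i ω}) atTop (𝓝 1) :=
  stmt0_general μ X Xlim hXmeas hXlimMeas hXnonneg hconv hmean Y hYindep hYdist
end

section
/- Let Z be a non-negative random variable with E[Z] < ∞. Then there exists a positive decreasing function ε : (0,∞) → (0,∞) with ε(s) → 0 as s → +∞ such that P(Z > s·ε(s)) = o(s^{−1}) as s → +∞. -/
/-!
Let `g t = E[Z; Z ≥ t]`, the tail of the expectation, which decreases to `0`. Take
`ε(s) = max (√(g √s)) (1 / √s)`. Then `s ε(s) ≥ √s`, so Markov's inequality on the event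
`{Z ≥ √s}` gives `s P(Z > s ε(s)) ≤ g(√s) / ε(s) ≤ √(g √s) → 0`.
-/

open MeasureTheory Filter
open scoped Topology

lemma div_le_sqrt_of_sqrt_le {a b : ℝ} (ha : 0 ≤ a) (hb : 0 < b) (hab : √a ≤ b) :
    a / b ≤ √a := by
  rw [div_le_iff₀ hb]
  calc a = √a * √a := (Real.mul_self_sqrt ha).symm
    _ ≤ √a * b := by gcongr

noncomputable def decayScale (g : ℝ → ℝ) (s : ℝ) : ℝ :=
  max (√(g √s)) (√s)⁻¹

lemma decayScale_pos (g : ℝ → ℝ) {s : ℝ} (hs : 0 < s) : 0 < decayScale g s :=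
  lt_max_of_lt_right (by positivity)

lemma sqrt_le_decayScale (g : ℝ → ℝ) (s : ℝ) : √(g √s) ≤ decayScale g s :=
  le_max_left _ _

lemma sqrt_le_mul_decayScale (g : ℝ → ℝ) {s : ℝ} (hs : 0 < s) : √s ≤ s * decayScale g s :=
  calc √s = s * (√s)⁻¹ := by rw [← div_eq_mul_inv, Real.div_sqrt]
    _ ≤ s * decayScale g s := by gcongr; exact le_max_right _ _

lemma antitoneOn_decayScale {g : ℝ → ℝ} (hg : Antitone g) :
    AntitoneOn (decayScale g) (Set.Ioi 0) :=
  fun _ ha _ _ hab => max_le_max (Real.sqrt_le_sqrt (hg (Real.sqrt_le_sqrt hab)))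
    (inv_anti₀ (Real.sqrt_pos.2 ha) (Real.sqrt_le_sqrt hab))

lemma tendsto_sqrt_comp_sqrt {g : ℝ → ℝ} (hg : Tendsto g atTop (𝓝 0)) :
    Tendsto (fun s => √(g √s)) atTop (𝓝 0) := by
  simpa [Function.comp_def] using
    (Real.continuous_sqrt.tendsto 0).comp (hg.comp Real.tendsto_sqrt_atTop)

lemma tendsto_decayScale {g : ℝ → ℝ} (hg : Tendsto g atTop (𝓝 0)) :
    Tendsto (decayScale g) atTop (𝓝 0) := by
  have h := (tendsto_sqrt_comp_sqrt hg).max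
    (tendsto_inv_atTop_zero.comp Real.tendsto_sqrt_atTop)
  rwa [max_self] at h

namespace MeasureTheory

variable {Ω : Type*} [MeasurableSpace Ω] {μ : Measure Ω} {f : Ω → ℝ}

noncomputable def tailIntegral (μ : Measure Ω) (f : Ω → ℝ) (t : ℝ) : ℝ :=
  ∫ ω in {ω | t ≤ f ω}, f ω ∂μ

lemma tailIntegral_nonneg (hf : 0 ≤ᵐ[μ] f) (t : ℝ) : 0 ≤ tailIntegral μ f t :=
  setIntegral_nonneg_of_ae hf

lemma antitone_tailIntegral (hf : 0 ≤ᵐ[μ] f) (hfi : Integrable f μ) :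
    Antitone (tailIntegral μ f) := fun _ _ hab =>
  setIntegral_mono_set hfi.integrableOn (ae_restrict_of_ae hf)
    (Eventually.of_forall fun _ hω => hab.trans hω)

lemma Integrable.tendsto_measure_le_atTop (hfi : Integrable f μ) :
    Tendsto (fun t => μ {ω | t ≤ f ω}) atTop (𝓝 0) := by
  have hfin : μ {ω | 1 ≤ f ω} ≠ ⊤ :=
    ne_top_of_le_ne_top (hfi.measure_norm_ge_lt_top one_pos).ne
      (measure_mono fun ω (hω : 1 ≤ f ω) => hω.trans (Real.le_norm_self _))
  have hempty : (⋂ t : ℝ, {ω | t ≤ f ω}) = ∅ :=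
    Set.eq_empty_of_forall_notMem fun ω hω =>
      (lt_add_one (f ω)).not_ge (Set.mem_iInter.1 hω (f ω + 1))
  simpa [Function.comp_def, hempty] using
    tendsto_measure_iInter_atTop (s := fun t => {ω | t ≤ f ω})
      (fun _ => nullMeasurableSet_le aemeasurable_const hfi.aemeasurable)
      (fun _ _ hab _ hω => hab.trans hω) ⟨1, hfin⟩

lemma Integrable.tendsto_tailIntegral_atTop (hfi : Integrable f μ) :
    Tendsto (tailIntegral μ f) atTop (𝓝 0) :=
  hfi.tendsto_setIntegral_nhds_zero hfi.tendsto_measure_le_atTop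

variable [IsFiniteMeasure μ]

lemma mul_measureReal_lt_le_tailIntegral (hf : 0 ≤ᵐ[μ] f) (hfi : Integrable f μ) {t c : ℝ}
    (hc : 0 ≤ c) (htc : t ≤ c) : c * μ.real {ω | c < f ω} ≤ tailIntegral μ f t := by
  -- Markov for `μ.restrict T` rather than a set-integral bound: `T` need not be measurable.
  set T := {ω | t ≤ f ω}
  have hsub : {ω | c < f ω} ⊆ T := fun _ hω => htc.trans (le_of_lt hω)
  have hrestrict : μ.real {ω | c < f ω} = (μ.restrict T).real {ω | c < f ω} := by
    rw [Measure.real, Measure.real, Measure.restrict_eq_self μ hsub]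
  calc c * μ.real {ω | c < f ω}
      ≤ c * (μ.restrict T).real {ω | c ≤ f ω} := by
        rw [hrestrict]
        exact mul_le_mul_of_nonneg_left
          (measureReal_mono (Set.ofPred_subset_ofPred.2 fun _ => le_of_lt)) hc
    _ ≤ tailIntegral μ f t :=
        mul_meas_ge_le_integral_of_nonneg (ae_restrict_of_ae hf) hfi.integrableOn c

lemma mul_measureReal_lt_mul_decayScale_le_sqrt (hf : 0 ≤ᵐ[μ] f) (hfi : Integrable f μ)
    {s : ℝ} (hs : 0 < s) :
    s * μ.real {ω | s * decayScale (tailIntegral μ f) s < f ω} ≤ √(tailIntegral μ f √s) := by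
  set g := tailIntegral μ f
  have hε := decayScale_pos g hs
  have hmarkov := mul_measureReal_lt_le_tailIntegral hf hfi (mul_pos hs hε).le
    (sqrt_le_mul_decayScale g hs)
  calc s * μ.real {ω | s * decayScale g s < f ω}
      = s * decayScale g s * μ.real {ω | s * decayScale g s < f ω} / decayScale g s := by
        field_simp
    _ ≤ g √s / decayScale g s := by gcongr
    _ ≤ √(g √s) := div_le_sqrt_of_sqrt_le (tailIntegral_nonneg hf _) hε (sqrt_le_decayScale g s)

end MeasureTheory

theorem stmt4 {Ω : Type*} [MeasurableSpace Ω] (μ : Measure Ω) [IsProbabilityMeasure μ]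
    (Z : Ω → ℝ) (hZnonneg : ∀ ω, 0 ≤ Z ω) (hZint : Integrable Z μ) :
    ∃ ε : ℝ → ℝ, (∀ s, 0 < s → 0 < ε s) ∧ AntitoneOn ε (Set.Ioi 0) ∧
      Tendsto ε atTop (𝓝 0) ∧
      Tendsto (fun s => s * (μ {ω | s * ε s < Z ω}).toReal) atTop (𝓝 0) := by
  have hZ : 0 ≤ᵐ[μ] Z := ae_of_all μ hZnonneg
  have hg : Tendsto (tailIntegral μ Z) atTop (𝓝 0) := hZint.tendsto_tailIntegral_atTop
  refine ⟨decayScale (tailIntegral μ Z), fun s => decayScale_pos _,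
    antitoneOn_decayScale (antitone_tailIntegral hZ hZint), tendsto_decayScale hg, ?_⟩
  refine tendsto_of_tendsto_of_tendsto_of_le_of_le' tendsto_const_nhds
    (tendsto_sqrt_comp_sqrt hg) ?_ ?_
  all_goals filter_upwards [eventually_gt_atTop 0] with s hs
  · positivity
  · exact mul_measureReal_lt_mul_decayScale_le_sqrt hZ hZint hs
end

section
/- Under the hypotheses of the previous setting (X_n ≥ 0 converging in distribution to X with 0 < E[X²] < ∞, E[X³] = ∞, E[X_n²] → E[X²]; m_n ↑ ∞; X_{n,1},…,X_{n,m_n} i.i.d. copies of X_n; S_n = Σ_j X_{n,j}³), one has m_n^{−3}·Σ_{{j,k,r}⊂[m_n]} X_{n,j}² X_{n,k}² X_{n,r}² = o_P(S_n). -/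
open MeasureTheory ProbabilityTheory Filter Finset
open scoped Topology BoundedContinuousFunction ENNReal

/-!
The triple sum is at most `(∑ⱼ Y_{n,j}²)³`, and by Markov's inequality `∑ⱼ Y_{n,j}² < m_n B`
outside an event of probability at most `E[X_n²] / B`; so the left side is bounded in
probability. On the other side, `E[X³] = ∞` yields a truncation `f_M(x) = min(x⁺, M)³` with
`E f_M(X) ≥ 2`, hence `E f_M(X_n) ≥ 1` for large `n` by convergence in distribution, and
Chebyshev's inequality for the bounded independent variables `f_M(Y_{n,j})` gives
`S_n ≥ ∑ⱼ f_M(Y_{n,j}) > m_n / 2` with probability tending to one.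
-/

lemma sum_triple_le_pow_three {m : ℕ} {a : ℕ → ℝ} (ha : ∀ j, 0 ≤ a j) :
    ∑ j ∈ range m, ∑ k ∈ range j, ∑ r ∈ range k, a j * a k * a r
      ≤ (∑ j ∈ range m, a j) ^ 3 := by
  have hprod : ∀ j k r, 0 ≤ a j * a k * a r := fun j k r =>
    mul_nonneg (mul_nonneg (ha j) (ha k)) (ha r)
  rw [pow_three, sum_mul_sum, sum_mul_sum]
  refine sum_le_sum fun j hj => ?_
  have hjm : j ≤ m := (mem_range.mp hj).le
  calc ∑ k ∈ range j, ∑ r ∈ range k, a j * a k * a r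
      ≤ ∑ k ∈ range j, ∑ r ∈ range m, a j * a k * a r :=
        sum_le_sum fun k hk => sum_le_sum_of_subset_of_nonneg
          (range_subset_range.mpr ((mem_range.mp hk).le.trans hjm)) fun r _ _ => hprod j k r
    _ ≤ ∑ k ∈ range m, ∑ r ∈ range m, a j * a k * a r :=
        sum_le_sum_of_subset_of_nonneg (range_subset_range.mpr hjm)
          fun k _ _ => sum_nonneg fun r _ => hprod j k r
    _ = ∑ k ∈ range m, a j * ∑ r ∈ range m, a k * a r := by simp only [mul_sum, mul_assoc]

lemma sum_triple_div_pow_three_lt {m : ℕ} (hm : 0 < m) {a : ℕ → ℝ} (ha : ∀ j, 0 ≤ a j) {B : ℝ}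
    (hsum : ∑ j ∈ range m, a j < m * B) :
    (∑ j ∈ range m, ∑ k ∈ range j, ∑ r ∈ range k, a j * a k * a r) / (m : ℝ) ^ 3 < B ^ 3 := by
  have hm' : (0 : ℝ) < m := Nat.cast_pos.mpr hm
  rw [div_lt_iff₀ (by positivity), ← mul_pow, mul_comm B]
  exact (sum_triple_le_pow_three ha).trans_lt
    (pow_lt_pow_left₀ hsum (sum_nonneg fun j _ => ha j) three_ne_zero)

noncomputable def cubeTrunc (M : ℕ) : ℝ →ᵇ ℝ :=
  BoundedContinuousFunction.ofNormedAddCommGroup (fun x => min (max x 0) M ^ 3) (by fun_prop)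
    ((M : ℝ) ^ 3) fun x => by
      have h0 : 0 ≤ min (max x 0) (M : ℝ) := le_min (le_max_right _ _) M.cast_nonneg
      rw [Real.norm_eq_abs, abs_of_nonneg (by positivity)]
      exact pow_le_pow_left₀ h0 (min_le_right _ _) 3

lemma cubeTrunc_apply (M : ℕ) (x : ℝ) : cubeTrunc M x = min (max x 0) M ^ 3 := rfl

lemma cubeTrunc_nonneg (M : ℕ) (x : ℝ) : 0 ≤ cubeTrunc M x :=
  pow_nonneg (le_min (le_max_right _ _) M.cast_nonneg) 3

lemma cubeTrunc_le_pow_three (M : ℕ) {x : ℝ} (hx : 0 ≤ x) : cubeTrunc M x ≤ x ^ 3 :=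
  pow_le_pow_left₀ (le_min (le_max_right _ _) M.cast_nonneg)
    ((min_le_left _ _).trans (max_eq_left hx).le) 3

lemma cubeTrunc_mono {M M' : ℕ} (h : M ≤ M') (x : ℝ) : cubeTrunc M x ≤ cubeTrunc M' x :=
  pow_le_pow_left₀ (le_min (le_max_right _ _) M.cast_nonneg)
    (min_le_min le_rfl (Nat.cast_le.mpr h)) 3

lemma ofReal_cubeTrunc_eventually_eq (x : ℝ) :
    (fun M => ENNReal.ofReal (cubeTrunc M x)) =ᶠ[atTop] fun _ => ENNReal.ofReal (x ^ 3) := by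
  rcases le_total x 0 with hx | hx
  · refine Eventually.of_forall fun M => ?_
    dsimp only
    rw [cubeTrunc_apply, max_eq_right hx, min_eq_left M.cast_nonneg,
      ENNReal.ofReal_of_nonpos (Odd.pow_nonpos (by decide) hx)]
    simp
  · filter_upwards [eventually_ge_atTop ⌈x⌉₊] with M hM
    rw [cubeTrunc_apply, max_eq_left hx, min_eq_left ((Nat.le_ceil x).trans (Nat.cast_le.mpr hM))]

lemma exists_le_integral_cubeTrunc {Ω : Type*} [MeasurableSpace Ω] {μ : Measure Ω}
    [IsFiniteMeasure μ] {Z : Ω → ℝ} (hZ : Measurable Z)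
    (hZ3 : ∫⁻ ω, ENNReal.ofReal (Z ω ^ 3) ∂μ = ∞) (C : ℝ) :
    ∃ M, C ≤ ∫ ω, cubeTrunc M (Z ω) ∂μ := by
  have hlim : Tendsto (fun M => ∫⁻ ω, ENNReal.ofReal (cubeTrunc M (Z ω)) ∂μ) atTop (𝓝 ∞) :=
    hZ3 ▸ lintegral_tendsto_of_tendsto_of_monotone
      (fun M => ((cubeTrunc M).continuous.measurable.comp hZ).ennreal_ofReal.aemeasurable)
      (ae_of_all _ fun ω M M' h => ENNReal.ofReal_le_ofReal (cubeTrunc_mono h _))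
      (ae_of_all _ fun ω => tendsto_const_nhds.congr' (ofReal_cubeTrunc_eventually_eq (Z ω)).symm)
  obtain ⟨M, hM⟩ := (hlim.eventually (eventually_ge_nhds (ENNReal.ofReal_lt_top (r := C)))).exists
  have hint : Integrable (fun ω => cubeTrunc M (Z ω)) μ :=
    ((cubeTrunc M).integrable (μ.map Z)).comp_measurable hZ
  refine ⟨M, ?_⟩
  rw [integral_eq_lintegral_of_nonneg_ae (ae_of_all _ fun ω => cubeTrunc_nonneg M _)
    hint.aestronglyMeasurable]
  exact (ENNReal.ofReal_le_iff_le_toReal hint.lintegral_lt_top.ne).mp hM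

lemma tendsto_zero_of_forall_le_ofReal_add {α : Type*} {l : Filter α} {u : α → ℝ≥0∞}
    (h : ∀ δ : ℝ, 0 < δ → ∃ v : α → ℝ≥0∞, Tendsto v l (𝓝 0) ∧
      ∀ᶠ x in l, u x ≤ ENNReal.ofReal δ + v x) :
    Tendsto u l (𝓝 0) := by
  refine ENNReal.tendsto_nhds_zero.mpr fun η hη => ?_
  obtain ⟨δ, -, hδ0, hδη⟩ := ENNReal.lt_iff_exists_real_btwn.mp (ENNReal.half_pos hη.ne')
  obtain ⟨v, hv, hu⟩ := h δ (ENNReal.ofReal_pos.mp hδ0)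
  filter_upwards [hu, ENNReal.tendsto_nhds_zero.mp hv (η / 2) (ENNReal.half_pos hη.ne')]
    with x hux hvx
  calc u x ≤ ENNReal.ofReal δ + v x := hux
    _ ≤ η / 2 + η / 2 := add_le_add hδη.le hvx
    _ = η := ENNReal.add_halves η

section Probability

variable {Ω : Type*} [MeasurableSpace Ω] {μ : Measure Ω}

lemma ProbabilityTheory.IdentDistrib.of_map_eq [IsProbabilityMeasure μ] {Y Z : Ω → ℝ}
    (hZ : AEMeasurable Z μ) (h : μ.map Y = μ.map Z) : IdentDistrib Y Z μ μ where
  aemeasurable_fst := AEMeasurable.of_map_ne_zero <| by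
    rw [h]; exact (Measure.isProbabilityMeasure_map hZ).ne_zero
  aemeasurable_snd := hZ
  map_eq := h

lemma measure_card_mul_le_sum_le [IsFiniteMeasure μ] {ι : Type*} {s : Finset ι}
    (hs : s.Nonempty) {g : ι → Ω → ℝ} (hg0 : ∀ i ∈ s, 0 ≤ᵐ[μ] g i)
    (hg : ∀ i ∈ s, Integrable (g i) μ) {a c : ℝ} (hga : ∀ i ∈ s, ∫ ω, g i ω ∂μ ≤ a)
    (hc : 0 < c) :
    μ {ω | #s * c ≤ ∑ i ∈ s, g i ω} ≤ ENNReal.ofReal (a / c) := by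
  have hs' : (0 : ℝ) < #s := Nat.cast_pos.mpr hs.card_pos
  have hmarkov : #s * c * μ.real {ω | #s * c ≤ ∑ i ∈ s, g i ω} ≤ #s * a :=
    calc _ ≤ ∫ ω, ∑ i ∈ s, g i ω ∂μ := mul_meas_ge_le_integral_of_nonneg
          (by filter_upwards [(eventually_all_finset s).mpr hg0] with ω hω
              exact sum_nonneg fun i hi => hω i hi)
          (integrable_finsetSum s hg) _
      _ ≤ #s * a := by simpa [integral_finsetSum s hg] using sum_le_sum hga
  have ha : 0 ≤ a := by
    obtain ⟨i, hi⟩ := hs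
    exact (integral_nonneg_of_ae (hg0 i hi)).trans (hga i hi)
  refine (ENNReal.le_ofReal_iff_toReal_le (measure_ne_top _ _) (div_nonneg ha hc.le)).mpr ?_
  rw [le_div_iff₀ hc, ← measureReal_def, mul_comm]
  exact le_of_mul_le_mul_left (by linarith [hmarkov]) hs'

lemma measure_sum_le_card_mul_half_le [IsFiniteMeasure μ] {ι : Type*} {s : Finset ι}
    (hs : s.Nonempty) {F : ι → Ω → ℝ} (hF : ∀ i ∈ s, MemLp (F i) 2 μ)
    (hindep : Set.Pairwise ↑s fun i j => F i ⟂ᵢ[μ] F j) {a V : ℝ} (ha : 0 < a)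
    (hmean : ∀ i ∈ s, a ≤ μ[F i]) (hvar : ∀ i ∈ s, Var[F i; μ] ≤ V) :
    μ {ω | ∑ i ∈ s, F i ω ≤ #s * a / 2} ≤ ENNReal.ofReal (4 * V / a ^ 2 / #s) := by
  have hs' : (0 : ℝ) < #s := Nat.cast_pos.mpr hs.card_pos
  have hsum_mean : #s * a ≤ μ[∑ i ∈ s, F i] := by
    simp only [Finset.sum_apply, integral_finsetSum s fun i hi => (hF i hi).integrable one_le_two]
    simpa using sum_le_sum hmean
  have hsum_var : Var[∑ i ∈ s, F i; μ] ≤ #s * V := by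
    simpa [IndepFun.variance_sum hF hindep] using sum_le_sum hvar
  calc μ {ω | ∑ i ∈ s, F i ω ≤ #s * a / 2}
      ≤ μ {ω | #s * a / 2 ≤ |(∑ i ∈ s, F i) ω - μ[∑ i ∈ s, F i]|} := by
        refine measure_mono fun ω hω => ?_
        simp only [Set.mem_ofPred_eq, Finset.sum_apply] at hω hsum_mean ⊢
        rw [abs_sub_comm, le_abs]
        left; linarith
    _ ≤ ENNReal.ofReal (Var[∑ i ∈ s, F i; μ] / (#s * a / 2) ^ 2) :=
        meas_ge_le_variance_div_sq (memLp_finsetSum' s hF) (by positivity)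
    _ ≤ ENNReal.ofReal (#s * V / (#s * a / 2) ^ 2) := by gcongr
    _ = ENNReal.ofReal (4 * V / a ^ 2 / #s) := by congr 1; field_simp; ring

end Probability

section TriangularArray

variable {Ω : Type*} [MeasurableSpace Ω] {μ : Measure Ω} [IsProbabilityMeasure μ]
  {X : ℕ → Ω → ℝ} {Y : ℕ → ℕ → Ω → ℝ} {m : ℕ → ℕ}

lemma tendsto_measure_sum_comp_le_half (hm : Tendsto m atTop atTop)
    (hident : ∀ n, ∀ j < m n, IdentDistrib (Y n j) (X n) μ μ)
    (hindep : ∀ n, iIndepFun (fun i : Fin (m n) => Y n i) μ)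
    (f : ℝ →ᵇ ℝ) {c : ℝ} (hc : 0 < c) (hmean : ∀ᶠ n in atTop, c ≤ ∫ ω, f (X n ω) ∂μ) :
    Tendsto (fun n => μ {ω | ∑ j ∈ range (m n), f (Y n j ω) ≤ m n * c / 2}) atTop (𝓝 0) := by
  have hf_ident : ∀ n (i : Fin (m n)),
      IdentDistrib (fun ω => f (Y n i ω)) (fun ω => f (X n ω)) μ μ :=
    fun n i => (hident n i i.2).comp f.continuous.measurable
  have hbound : ∀ᶠ n in atTop, μ {ω | ∑ j ∈ range (m n), f (Y n j ω) ≤ m n * c / 2}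
      ≤ ENNReal.ofReal (4 * ‖f‖ ^ 2 / c ^ 2 / m n) := by
    filter_upwards [hmean, hm.eventually_ge_atTop 1] with n hn hm1
    have hbounded : ∀ i : Fin (m n), ∀ᵐ ω ∂μ, f (Y n i ω) ∈ Set.Icc (-‖f‖) ‖f‖ := fun i =>
      ae_of_all _ fun ω => abs_le.mp ((Real.norm_eq_abs _).symm ▸ f.norm_coe_le_norm _)
    have hchebyshev := measure_sum_le_card_mul_half_le (μ := μ) (V := ‖f‖ ^ 2)
      (univ_nonempty_iff.mpr ⟨⟨0, hm1⟩⟩) (F := fun (i : Fin (m n)) ω => f (Y n i ω))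
      (fun i _ => MemLp.of_bound (hf_ident n i).aestronglyMeasurable_fst ‖f‖
        (ae_of_all _ fun ω => f.norm_coe_le_norm _))
      (fun i _ j _ hij => ((hindep n).indepFun hij).comp f.continuous.measurable
        f.continuous.measurable)
      hc (fun i _ => (hf_ident n i).integral_eq ▸ hn)
      (fun i _ => (variance_le_sq_of_bounded (hbounded i) (hf_ident n i).aemeasurable_fst).trans
        (le_of_eq (by ring)))
    simp only [card_univ, Fintype.card_fin] at hchebyshev
    convert hchebyshev using 5 with ω
    exact (Fin.sum_univ_eq_sum_range (fun j => f (Y n j ω)) _).symm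
  have hlim : Tendsto (fun n => ENNReal.ofReal (4 * ‖f‖ ^ 2 / c ^ 2 / m n)) atTop (𝓝 0) := by
    simpa using ENNReal.tendsto_ofReal ((tendsto_const_div_atTop_nhds_zero_nat _).comp hm)
  exact tendsto_of_tendsto_of_tendsto_of_le_of_le' tendsto_const_nhds hlim
    (Eventually.of_forall fun _ => zero_le) hbound

lemma measure_mul_le_sum_sq_le {n : ℕ} (hn : 0 < m n)
    (hident : ∀ j < m n, IdentDistrib (Y n j) (X n) μ μ)
    (hX : Integrable (fun ω => X n ω ^ 2) μ) {B : ℝ} (hB : 0 < B) :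
    μ {ω | m n * B ≤ ∑ j ∈ range (m n), Y n j ω ^ 2}
      ≤ ENNReal.ofReal ((∫ ω, X n ω ^ 2 ∂μ) / B) := by
  have hsq_ident : ∀ j ∈ range (m n),
      IdentDistrib (fun ω => Y n j ω ^ 2) (fun ω => X n ω ^ 2) μ μ := fun j hj =>
    (hident j (mem_range.mp hj)).comp (continuous_pow 2).measurable
  simpa using measure_card_mul_le_sum_le (nonempty_range_iff.mpr hn.ne')
    (g := fun j ω => Y n j ω ^ 2) (fun j _ => ae_of_all _ fun ω => sq_nonneg _)
    (fun j hj => (hsq_ident j hj).integrable_iff.mpr hX)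
    (fun j hj => (hsq_ident j hj).integral_eq.le) hB

end TriangularArray

lemma sum_triple_sq_div_le_mul_sum_cube {m : ℕ} (hm : 0 < m) {y : ℕ → ℝ}
    (hy : ∀ j ∈ range m, 0 ≤ y j) (M : ℕ) {B ε : ℝ} (hε : 0 < ε) (hmB : 2 * B ^ 3 ≤ ε * m)
    (hsq : ∑ j ∈ range m, y j ^ 2 < m * B)
    (hcube : m * 1 / 2 < ∑ j ∈ range m, cubeTrunc M (y j)) :
    (∑ j ∈ range m, ∑ k ∈ range j, ∑ r ∈ range k, y j ^ 2 * y k ^ 2 * y r ^ 2) / (m : ℝ) ^ 3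
      ≤ ε * ∑ j ∈ range m, y j ^ 3 := by
  have htrunc : ∑ j ∈ range m, cubeTrunc M (y j) ≤ ∑ j ∈ range m, y j ^ 3 :=
    sum_le_sum fun j hj => cubeTrunc_le_pow_three M (hy j hj)
  calc _ ≤ B ^ 3 := (sum_triple_div_pow_three_lt hm (fun j => sq_nonneg (y j)) hsq).le
    _ ≤ ε * (m * 1 / 2) := by linarith
    _ ≤ ε * ∑ j ∈ range m, y j ^ 3 := by gcongr; linarith

theorem stmt10_general {Ω : Type*} [MeasurableSpace Ω] (μ : Measure Ω) [IsProbabilityMeasure μ]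
    (X : ℕ → Ω → ℝ) (Xlim : Ω → ℝ)
    (hXmeas : ∀ n, Measurable (X n)) (hXlimMeas : Measurable Xlim)
    (hXnonneg : ∀ n ω, 0 ≤ X n ω)
    (hconv : ∀ f : ℝ →ᵇ ℝ,
      Tendsto (fun n => ∫ ω, f (X n ω) ∂μ) atTop (𝓝 (∫ ω, f (Xlim ω) ∂μ)))
    (h3inf : ∫⁻ ω, ENNReal.ofReal (Xlim ω ^ 3) ∂μ = ⊤)
    (hn2int : ∀ n, Integrable (fun ω => X n ω ^ 2) μ)
    (h2conv : Tendsto (fun n => ∫ ω, X n ω ^ 2 ∂μ) atTop (𝓝 (∫ ω, Xlim ω ^ 2 ∂μ)))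
    (m : ℕ → ℕ) (hmtop : Tendsto m atTop atTop)
    (Y : ℕ → ℕ → Ω → ℝ)
    (hYindep : ∀ n, iIndepFun
      (fun i : Fin (m n) => Y n i) μ)
    (hYdist : ∀ n i, i < m n → μ.map (Y n i) = μ.map (X n)) :
    ∀ ε > (0 : ℝ), Tendsto (fun n : ℕ =>
      μ {ω | ε * (∑ j ∈ Finset.range (m n), Y n j ω ^ 3) <
        (∑ j ∈ Finset.range (m n), ∑ k ∈ Finset.range j, ∑ r ∈ Finset.range k,
            Y n j ω ^ 2 * Y n k ω ^ 2 * Y n r ω ^ 2)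
          / (m n : ℝ) ^ 3}) atTop (𝓝 0) := by
  intro ε hε
  have hident : ∀ n, ∀ j < m n, IdentDistrib (Y n j) (X n) μ μ := fun n j hj =>
    IdentDistrib.of_map_eq (hXmeas n).aemeasurable (hYdist n j hj)
  obtain ⟨M, hM⟩ := exists_le_integral_cubeTrunc hXlimMeas h3inf 2
  have htrunc := tendsto_measure_sum_comp_le_half hmtop hident hYindep (cubeTrunc M) one_pos
    ((hconv (cubeTrunc M)).eventually (eventually_ge_nhds (by linarith)))
  refine tendsto_zero_of_forall_le_ofReal_add fun δ hδ => ⟨_, htrunc, ?_⟩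
  set L := ∫ ω, Xlim ω ^ 2 ∂μ
  have hL : 0 < L + 1 :=
    add_pos_of_nonneg_of_pos (integral_nonneg fun ω => sq_nonneg (Xlim ω)) one_pos
  set B := (L + 1) / δ
  filter_upwards [h2conv.eventually (eventually_le_nhds (lt_add_one L)),
    hmtop.eventually_ge_atTop (max 1 ⌈2 * B ^ 3 / ε⌉₊)] with n hn2 hmn
  have hm0 : 0 < m n := (le_max_left _ _).trans hmn
  have hmB : 2 * B ^ 3 ≤ ε * m n := by
    rw [← div_le_iff₀' hε]
    exact (Nat.le_ceil _).trans (Nat.cast_le.mpr ((le_max_right _ _).trans hmn))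
  have hnonneg : ∀ᵐ ω ∂μ, ∀ j ∈ range (m n), 0 ≤ Y n j ω :=
    (eventually_all_finset _).mpr fun j hj =>
      (hident n j (mem_range.mp hj)).symm.ae_snd measurableSet_Ici (ae_of_all _ (hXnonneg n))
  have hmarkov : μ {ω | m n * B ≤ ∑ j ∈ range (m n), Y n j ω ^ 2} ≤ ENNReal.ofReal δ :=
    (measure_mul_le_sum_sq_le hm0 (hident n) (hn2int n) (div_pos hL hδ)).trans
      (ENNReal.ofReal_le_ofReal <| by
        rwa [div_le_iff₀ (div_pos hL hδ), mul_div_cancel₀ _ hδ.ne'])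
  calc _ ≤ μ ({ω | m n * B ≤ ∑ j ∈ range (m n), Y n j ω ^ 2} ∪
        {ω | ∑ j ∈ range (m n), cubeTrunc M (Y n j ω) ≤ m n * 1 / 2}) :=
        measure_mono_ae <| hnonneg.mono fun ω hω hbad =>
          or_iff_not_and_not.mpr fun ⟨hsq, hcube⟩ => not_lt.mpr
            (sum_triple_sq_div_le_mul_sum_cube hm0 hω M hε hmB (not_le.mp hsq) (not_le.mp hcube))
            hbad
    _ ≤ _ := (measure_union_le _ _).trans (add_le_add_left hmarkov _)

theorem stmt10 {Ω : Type*} [MeasurableSpace Ω] (μ : Measure Ω) [IsProbabilityMeasure μ]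
    (X : ℕ → Ω → ℝ) (Xlim : Ω → ℝ)
    (hXmeas : ∀ n, Measurable (X n)) (hXlimMeas : Measurable Xlim)
    (hXnonneg : ∀ n ω, 0 ≤ X n ω) (hXlimNonneg : ∀ ω, 0 ≤ Xlim ω)
    (hconv : ∀ f : ℝ →ᵇ ℝ,
      Tendsto (fun n => ∫ ω, f (X n ω) ∂μ) atTop (𝓝 (∫ ω, f (Xlim ω) ∂μ)))
    (h2pos : 0 < ∫ ω, Xlim ω ^ 2 ∂μ)
    (h2int : Integrable (fun ω => Xlim ω ^ 2) μ)
    (h3inf : ∫⁻ ω, ENNReal.ofReal (Xlim ω ^ 3) ∂μ = ⊤)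
    (hn2int : ∀ n, Integrable (fun ω => X n ω ^ 2) μ)
    (h2conv : Tendsto (fun n => ∫ ω, X n ω ^ 2 ∂μ) atTop (𝓝 (∫ ω, Xlim ω ^ 2 ∂μ)))
    (m : ℕ → ℕ) (hmono : Monotone m) (hmtop : Tendsto m atTop atTop)
    (Y : ℕ → ℕ → Ω → ℝ)
    (hYindep : ∀ n, iIndepFun
      (fun i : Fin (m n) => Y n i) μ)
    (hYdist : ∀ n i, i < m n → μ.map (Y n i) = μ.map (X n)) :
    ∀ ε > (0 : ℝ), Tendsto (fun n : ℕ =>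
      μ {ω | ε * (∑ j ∈ Finset.range (m n), Y n j ω ^ 3) <
        (∑ j ∈ Finset.range (m n), ∑ k ∈ Finset.range j, ∑ r ∈ Finset.range k,
            Y n j ω ^ 2 * Y n k ω ^ 2 * Y n r ω ^ 2)
          / (m n : ℝ) ^ 3}) atTop (𝓝 0) :=
  stmt10_general μ X Xlim hXmeas hXlimMeas hXnonneg hconv h3inf hn2int h2conv m hmtop Y hYindep
    hYdist
end
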